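/- For a qubit (dim H = 2) quantum statistical model with d-dimensional parameter (1 ≤ d ≤ 3) and SLD quantum Fisher information J_θ > 0, the set of attainable classical Fisher information matrices is exactly {√J_θ · G · √J_θ : G a d×d real positive semidefinite matrix with Tr G ≤ 1}. -/

import Mathlib

/-!
For a POVM element `E` with probability `p = Tr ρE` and probability gradient `wᵢ = ⟨Lᵢ, E⟩`,
Bessel's inequality in the SLD inner product (the `Lᵢ` span a subspace orthogonal to `1`, with
Gram matrix `J`) gives `wᵀJ⁻¹w + p² ≤ ⟨E, E⟩`, and on a qubit Cayley–Hamilton gives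
`⟨E, E⟩ = p Tr E - det E ≤ p Tr E`. Summing `wᵀJ⁻¹w / p ≤ Tr E - p` over the POVM yields
`Tr (J⁻¹ g(M)) ≤ Tr 1 - Tr ρ = 2 - 1 = 1`.

Conversely, for `uᵀJ⁻¹u = 1` the observable `X = ∑ᵢ (J⁻¹u)ᵢ Lᵢ` satisfies `X² = (Tr X) X + 1`,
and its two spectral projections form a POVM with Fisher information `uuᵀ`. Writing a positive
semidefinite `A` as `∑ₖ aₖaₖᵀ` and mixing these measurements with weights `aₖᵀJ⁻¹aₖ` (padded
with the trivial measurement) realizes `A` as soon as `Tr (J⁻¹A) ≤ 1`. Finally `G ↦ √J G √J`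
maps `{G ⪰ 0, Tr G ≤ 1}` onto `{A ⪰ 0, Tr (J⁻¹A) ≤ 1}`.
-/

open Matrix ComplexOrder

open scoped Classical in
noncomputable def msqrt {d : ℕ} (A : Matrix (Fin d) (Fin d) ℝ) : Matrix (Fin d) (Fin d) ℝ :=
  if h : A.PosSemidef then
    h.1.eigenvectorUnitary.1 * diagonal ((↑) ∘ (√·) ∘ h.1.eigenvalues) *
      (star h.1.eigenvectorUnitary : Matrix (Fin d) (Fin d) ℝ)
  else 0

namespace Matrix.IsHermitian

variable {n : Type*} [Fintype n] {A B : Matrix n n ℂ}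

lemma ofReal_re_trace (hA : A.IsHermitian) : (A.trace.re : ℂ) = A.trace := by
  refine Complex.conj_eq_iff_re.mp ?_
  rw [← Complex.star_def, ← trace_conjTranspose, hA.eq]

lemma ofReal_re_trace_mul (hA : A.IsHermitian) (hB : B.IsHermitian) :
    ((A * B).trace.re : ℂ) = (A * B).trace := by
  refine Complex.conj_eq_iff_re.mp ?_
  rw [← Complex.star_def, ← trace_conjTranspose, conjTranspose_mul, hA.eq, hB.eq,
    trace_mul_comm]

lemma ofReal_re_det [DecidableEq n] (hA : A.IsHermitian) : (A.det.re : ℂ) = A.det := by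
  refine Complex.conj_eq_iff_re.mp ?_
  rw [← Complex.star_def, ← det_conjTranspose, hA.eq]

lemma posSemidef_of_isIdempotentElem {R : Type*} [CommRing R] [PartialOrder R] [StarRing R]
    [StarOrderedRing R] {P : Matrix n n R} (hP : P.IsHermitian) (h : IsIdempotentElem P) :
    P.PosSemidef := by
  have hPP : Pᴴ * P = P := by rw [hP.eq, h.eq]
  exact hPP ▸ posSemidef_conjTranspose_mul_self P

end Matrix.IsHermitian

lemma isHermitian_sum_smul {n ι : Type*} [Fintype ι] {L : ι → Matrix n n ℂ}
    (hL : ∀ i, (L i).IsHermitian) (c : ι → ℝ) : (∑ i, c i • L i).IsHermitian :=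
  isSelfAdjoint_sum _ fun i _ => (hL i).smul (IsSelfAdjoint.all (c i))

lemma mul_self_fin_two {R : Type*} [CommRing R] (X : Matrix (Fin 2) (Fin 2) R) :
    X * X = X.trace • X - X.det • 1 := by
  ext i j
  fin_cases i <;> fin_cases j <;>
    simp [mul_apply, Fin.sum_univ_two, trace_fin_two, det_fin_two, one_apply] <;> ring

lemma trace_mul_mul_self_fin_two {R : Type*} [CommRing R] (ρ X : Matrix (Fin 2) (Fin 2) R) :
    (ρ * (X * X)).trace = X.trace * (ρ * X).trace - X.det * ρ.trace := by
  rw [mul_self_fin_two, mul_sub, mul_smul_comm, mul_smul_comm, mul_one, trace_sub, trace_smul,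
    trace_smul, smul_eq_mul, smul_eq_mul]

/-- `t • X + a • 1` is the spectral projection of `X` onto its eigenvalue `(σ + √(σ² + 4)) / 2`. -/
lemma exists_isIdempotentElem_smul_add_smul_one {R : Type*} [Ring R] [Algebra ℝ R] {X : R}
    {σ : ℝ} (hX : X * X = σ • X + 1) :
    ∃ t a : ℝ, 0 < a ∧ a < 1 ∧ t ^ 2 = a * (1 - a) ∧ IsIdempotentElem (t • X + a • 1) := by
  set r := √(σ ^ 2 + 4)
  have hr : r ^ 2 = σ ^ 2 + 4 := Real.sq_sqrt (by positivity)
  have hr0 : 0 < r := by positivity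
  obtain ⟨hσ₁, hσ₂⟩ := abs_lt.mp (show |σ| < r by nlinarith [sq_abs σ, abs_nonneg σ])
  refine ⟨1 / r, (r - σ) / (2 * r), by apply div_pos <;> linarith, ?_, ?_, ?_⟩
  · rw [div_lt_one (by positivity)]
    linarith
  · field_simp
    nlinarith
  · have expand (t a : ℝ) : (t • X + a • 1) * (t • X + a • 1) =
        (t ^ 2 * σ + 2 * t * a) • X + (t ^ 2 + a ^ 2) • (1 : R) := by
      simp only [add_mul, mul_add, smul_mul_smul_comm, one_mul, mul_one, hX]
      module
    rw [IsIdempotentElem, expand]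
    congr 2
    · field_simp
      ring
    · field_simp
      nlinarith

section SLDInner

variable {n : Type*} [Fintype n]

/-- Agrees with `⟨A, B⟩_θ = ½ Tr ρ(A*B + BA*)` for Hermitian `A`, `B` (`ofReal_sldInner`);
dropping the adjoint and taking the real part makes it `ℝ`-bilinear. -/
noncomputable def sldInner (ρ : Matrix n n ℂ) : Matrix n n ℂ →ₗ[ℝ] Matrix n n ℂ →ₗ[ℝ] ℝ :=
  LinearMap.mk₂ ℝ (fun A B => ((ρ * (A * B + B * A)).trace / 2).re)
    (fun A₁ A₂ B => by simp only [add_mul, mul_add, trace_add, add_div, Complex.add_re]; ring)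
    (fun c A B => by
      simp only [smul_mul_assoc, mul_smul_comm, ← smul_add, trace_smul, smul_div_assoc,
        Complex.smul_re])
    (fun A B₁ B₂ => by simp only [add_mul, mul_add, trace_add, add_div, Complex.add_re]; ring)
    (fun c A B => by
      simp only [smul_mul_assoc, mul_smul_comm, ← smul_add, trace_smul, smul_div_assoc,
        Complex.smul_re])

variable {ρ A B : Matrix n n ℂ}

lemma sldInner_apply : sldInner ρ A B = ((ρ * (A * B + B * A)).trace / 2).re := rfl

lemma sldInner_comm : sldInner ρ A B = sldInner ρ B A := by
  simp only [sldInner_apply, add_comm]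

lemma sldInner_self : sldInner ρ A A = (ρ * (A * A)).trace.re := by
  simp [sldInner_apply, ← two_smul ℂ (A * A)]

lemma ofReal_sldInner (hρ : ρ.IsHermitian) (hA : A.IsHermitian) (hB : B.IsHermitian) :
    (sldInner ρ A B : ℂ) = 1 / 2 * (ρ * (A * B + B * A)).trace := by
  have hAB : (A * B + B * A).IsHermitian := by
    simp only [IsHermitian, conjTranspose_add, conjTranspose_mul, hA.eq, hB.eq, add_comm]
  rw [← hρ.ofReal_re_trace_mul hAB, sldInner_apply, Complex.div_ofNat_re]
  push_cast
  ring

lemma sldInner_self_nonneg (hρ : ρ.PosSemidef) (hA : A.IsHermitian) : 0 ≤ sldInner ρ A A := by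
  have h : (ρ * (A * A)).trace = (Aᴴ * ρ * A).trace := by
    rw [hA.eq, ← Matrix.mul_assoc, trace_mul_comm, Matrix.mul_assoc]
  rw [sldInner_self, h]
  exact (Complex.nonneg_iff.mp (hρ.conjTranspose_mul_mul_same A).trace_nonneg).1

variable [DecidableEq n]

lemma sldInner_one_left : sldInner ρ 1 B = (ρ * B).trace.re := by
  simp [sldInner_apply, ← two_smul ℂ B]

lemma sldInner_one_one (hρ1 : ρ.trace = 1) : sldInner ρ 1 1 = 1 := by
  simp [sldInner_one_left, hρ1]

lemma sldInner_one_nonneg (hρ : ρ.PosSemidef) (hB : B.PosSemidef) : 0 ≤ sldInner ρ 1 B := by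
  obtain ⟨m, v, rfl⟩ := posSemidef_iff_eq_sum_vecMulVec.mp hB
  rw [sldInner_one_left, Finset.mul_sum, trace_sum, Complex.re_sum]
  refine Finset.sum_nonneg fun k _ => ?_
  rw [mul_vecMulVec, trace_vecMulVec, dotProduct_comm]
  exact (Complex.nonneg_iff.mp (hρ.dotProduct_mulVec_nonneg (v k))).1

lemma sldInner_self_add_sq_le (hρ : ρ.PosSemidef) (hρ1 : ρ.trace = 1) {X M : Matrix n n ℂ}
    (hX : X.IsHermitian) (hM : M.IsHermitian) (hX1 : sldInner ρ X 1 = 0)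
    (hXM : sldInner ρ X M = sldInner ρ X X) :
    sldInner ρ X X + sldInner ρ 1 M ^ 2 ≤ sldInner ρ M M := by
  set p := sldInner ρ 1 M
  have hZ : (M - p • 1 - X).IsHermitian :=
    (hM.sub (isHermitian_one.smul (IsSelfAdjoint.all p))).sub hX
  have h := sldInner_self_nonneg hρ hZ
  simp only [map_sub, map_smul, LinearMap.sub_apply, LinearMap.smul_apply, smul_eq_mul] at h
  rw [sldInner_comm (A := 1) (B := X), sldInner_comm (A := M) (B := X),
    sldInner_comm (A := M) (B := 1), sldInner_one_one hρ1, hX1, hXM] at h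
  nlinarith [h]

end SLDInner

section Qubit

variable {ρ : Matrix (Fin 2) (Fin 2) ℂ}

lemma sldInner_self_le_mul_re_trace (hρ : ρ.IsHermitian) (hρ1 : ρ.trace = 1)
    {M : Matrix (Fin 2) (Fin 2) ℂ} (hM : M.PosSemidef) :
    sldInner ρ M M ≤ sldInner ρ 1 M * M.trace.re := by
  have hdet := Complex.nonneg_iff.mp hM.det_nonneg
  rw [sldInner_self, sldInner_one_left, trace_mul_mul_self_fin_two, hρ1, mul_one,
    ← hρ.ofReal_re_trace_mul hM.1, ← hM.1.ofReal_re_trace, ← Complex.ofReal_mul,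
    Complex.sub_re]
  simp only [Complex.ofReal_re]
  linarith [hdet.1]

lemma mul_self_eq_re_trace_smul_add_one (hρ : ρ.IsHermitian) (hρ1 : ρ.trace = 1)
    {X : Matrix (Fin 2) (Fin 2) ℂ} (hX : X.IsHermitian) (hX1 : sldInner ρ X 1 = 0)
    (hXX : sldInner ρ X X = 1) :
    X * X = X.trace.re • X + 1 := by
  have hρX : (ρ * X).trace = 0 := by
    rw [← hρ.ofReal_re_trace_mul hX, ← sldInner_one_left, sldInner_comm, hX1,
      Complex.ofReal_zero]
  have hdet : X.det = -1 := by
    rw [sldInner_self, trace_mul_mul_self_fin_two, hρX, hρ1, mul_zero, mul_one, zero_sub,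
      Complex.neg_re] at hXX
    rw [← hX.ofReal_re_det, show X.det.re = -1 by linarith]
    push_cast
    rfl
  rw [mul_self_fin_two, hdet, ← hX.ofReal_re_trace, Complex.coe_smul]
  simp [sub_eq_add_neg]

end Qubit

section Gram

variable {n ι : Type*} [Fintype n] {ρ : Matrix n n ℂ} {L : ι → Matrix n n ℂ}

/-- `probGrad ρ L E i = ⟨Lᵢ, E⟩_ρ` is the derivative `∂ᵢ Tr (ρ_θ E)` of the probability of the
outcome `E`. -/
noncomputable def probGrad (ρ : Matrix n n ℂ) (L : ι → Matrix n n ℂ) :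
    Matrix n n ℂ →ₗ[ℝ] ι → ℝ :=
  LinearMap.pi fun i => sldInner ρ (L i)

lemma probGrad_apply (E : Matrix n n ℂ) (i : ι) : probGrad ρ L E i = sldInner ρ (L i) E := rfl

variable [Fintype ι]

lemma sldInner_sum_smul_left (c : ι → ℝ) (B : Matrix n n ℂ) :
    sldInner ρ (∑ i, c i • L i) B = c ⬝ᵥ probGrad ρ L B := by
  simp [dotProduct, probGrad_apply]

lemma probGrad_sum_smul {J : Matrix ι ι ℝ} (hJL : ∀ i j, sldInner ρ (L i) (L j) = J i j)
    (c : ι → ℝ) : probGrad ρ L (∑ j, c j • L j) = J *ᵥ c := by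
  ext i
  simp [probGrad_apply, mulVec, dotProduct, hJL, mul_comm]

variable [DecidableEq n] [DecidableEq ι] {J : Matrix ι ι ℝ}

/-- Bessel's inequality: `∑ᵢ (J⁻¹w)ᵢ Lᵢ` is the orthogonal projection of `M` onto the span of
the `Lᵢ`, which is orthogonal to the unit vector `1`. -/
lemma dotProduct_inv_mulVec_add_sq_le (hρ : ρ.PosSemidef) (hρ1 : ρ.trace = 1)
    (hL : ∀ i, (L i).IsHermitian) (hL1 : ∀ i, sldInner ρ (L i) 1 = 0)
    (hJL : ∀ i j, sldInner ρ (L i) (L j) = J i j) (hJ : IsUnit J.det) {M : Matrix n n ℂ}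
    (hM : M.IsHermitian) :
    probGrad ρ L M ⬝ᵥ J⁻¹ *ᵥ probGrad ρ L M + sldInner ρ 1 M ^ 2 ≤ sldInner ρ M M := by
  set w := probGrad ρ L M
  set c := J⁻¹ *ᵥ w
  have hJc : J *ᵥ c = w := by rw [mulVec_mulVec, mul_nonsing_inv J hJ, one_mulVec]
  have hXX : sldInner ρ (∑ i, c i • L i) (∑ i, c i • L i) = c ⬝ᵥ w := by
    rw [sldInner_sum_smul_left, probGrad_sum_smul hJL, hJc]
  have hX1 : sldInner ρ (∑ i, c i • L i) 1 = 0 := by simp [hL1]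
  have h := sldInner_self_add_sq_le hρ hρ1 (isHermitian_sum_smul hL c) hM hX1
    ((sldInner_sum_smul_left c M).trans hXX.symm)
  rwa [hXX, dotProduct_comm] at h

end Gram

section POVM

variable {n κ β : Type*} [DecidableEq n] [Fintype κ]

def IsPOVM (M : κ → Matrix n n ℂ) : Prop :=
  (∀ k, (M k).PosSemidef) ∧ ∑ k, M k = 1

lemma IsPOVM.comp_equiv {κ' : Type*} [Fintype κ'] {M : κ → Matrix n n ℂ} (hM : IsPOVM M)
    (e : κ' ≃ κ) : IsPOVM (M ∘ e) :=
  ⟨fun k => hM.1 (e k), (e.sum_comp M).trans hM.2⟩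

noncomputable def mixture (μ : κ → ℝ) (M : κ → β → Matrix n n ℂ) :
    Option (κ × β) → Matrix n n ℂ
  | none => (1 - ∑ k, μ k) • 1
  | some kb => μ kb.1 • M kb.1 kb.2

lemma isPOVM_mixture [Fintype β] {μ : κ → ℝ} (hμ : ∀ k, 0 ≤ μ k) (hμ1 : ∑ k, μ k ≤ 1)
    {M : κ → β → Matrix n n ℂ} (hM : ∀ k, IsPOVM (M k)) : IsPOVM (mixture μ M) := by
  refine ⟨?_, ?_⟩
  · rintro (_ | ⟨k, b⟩)
    · exact PosSemidef.one.smul (sub_nonneg.mpr hμ1)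
    · exact ((hM k).1 b).smul (hμ k)
  · rw [Fintype.sum_option, Fintype.sum_prod_type]
    simp only [mixture, ← Finset.smul_sum, (hM _).2]
    rw [← Finset.sum_smul, ← add_smul, sub_add_cancel, one_smul]

end POVM

section Fisher

variable {n ι κ : Type*} [Fintype n] [DecidableEq n] [Fintype κ]

/-- When `⟨1, E⟩_ρ = 0` this is `0` (as `0⁻¹ = 0`), matching the division in the statement. -/
noncomputable def fisherTerm (ρ : Matrix n n ℂ) (L : ι → Matrix n n ℂ) (E : Matrix n n ℂ) :
    Matrix ι ι ℝ :=
  (sldInner ρ 1 E)⁻¹ • vecMulVec (probGrad ρ L E) (probGrad ρ L E)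

noncomputable def fisherInfo (ρ : Matrix n n ℂ) (L : ι → Matrix n n ℂ)
    (M : κ → Matrix n n ℂ) : Matrix ι ι ℝ :=
  ∑ k, fisherTerm ρ L (M k)

variable {ρ : Matrix n n ℂ} {L : ι → Matrix n n ℂ}

lemma fisherInfo_apply (M : κ → Matrix n n ℂ) (i j : ι) :
    fisherInfo ρ L M i j =
      ∑ k, sldInner ρ (L i) (M k) * sldInner ρ (L j) (M k) / sldInner ρ 1 (M k) := by
  simp [fisherInfo, fisherTerm, Matrix.sum_apply, vecMulVec_apply, probGrad_apply,
    div_eq_inv_mul]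

lemma fisherInfo_comp_equiv {κ' : Type*} [Fintype κ'] (M : κ → Matrix n n ℂ) (e : κ' ≃ κ) :
    fisherInfo ρ L (M ∘ e) = fisherInfo ρ L M :=
  e.sum_comp fun k => fisherTerm ρ L (M k)

lemma fisherInfo_posSemidef [Fintype ι] (hρ : ρ.PosSemidef) {M : κ → Matrix n n ℂ}
    (hM : ∀ k, (M k).PosSemidef) : (fisherInfo ρ L M).PosSemidef :=
  posSemidef_sum _ fun k _ => by
    simpa [fisherTerm, star_trivial] using
      (posSemidef_vecMulVec_self_star (probGrad ρ L (M k))).smul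
        (inv_nonneg.mpr (sldInner_one_nonneg hρ (hM k)))

lemma fisherTerm_smul (c : ℝ) (E : Matrix n n ℂ) :
    fisherTerm ρ L (c • E) = c • fisherTerm ρ L E := by
  rw [fisherTerm, fisherTerm, map_smul, map_smul, smul_vecMulVec, vecMulVec_smul, smul_smul,
    smul_smul, smul_eq_mul]
  rcases eq_or_ne c 0 with rfl | hc
  · simp
  · rw [smul_smul, mul_inv]
    congr 1
    field_simp

lemma fisherTerm_one (hL1 : ∀ i, sldInner ρ (L i) 1 = 0) : fisherTerm ρ L 1 = 0 := by
  have h : probGrad ρ L 1 = 0 := funext hL1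
  simp [fisherTerm, h]

lemma fisherTerm_smul_add_smul_one (hρ1 : ρ.trace = 1) (hL1 : ∀ i, sldInner ρ (L i) 1 = 0)
    {X : Matrix n n ℂ} (hX1 : sldInner ρ 1 X = 0) (t a : ℝ) :
    fisherTerm ρ L (t • X + a • 1) =
      (t ^ 2 / a) • vecMulVec (probGrad ρ L X) (probGrad ρ L X) := by
  have h : probGrad ρ L 1 = 0 := funext hL1
  simp only [fisherTerm, map_add, map_smul, h, hX1, sldInner_one_one hρ1, smul_zero, add_zero,
    mul_zero, zero_add, smul_vecMulVec, vecMulVec_smul, smul_smul, smul_eq_mul]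
  congr 1
  field_simp

lemma fisherInfo_mixture {β : Type*} [Fintype β] (hL1 : ∀ i, sldInner ρ (L i) 1 = 0)
    (μ : κ → ℝ) (M : κ → β → Matrix n n ℂ) :
    fisherInfo ρ L (mixture μ M) = ∑ k, μ k • fisherInfo ρ L (M k) := by
  rw [fisherInfo, Fintype.sum_option, Fintype.sum_prod_type]
  simp only [mixture, fisherTerm_smul, fisherTerm_one hL1, smul_zero, zero_add, fisherInfo,
    Finset.smul_sum]

end Fisher
section QubitFisher

variable {ι : Type*} [Fintype ι] [DecidableEq ι] {ρ : Matrix (Fin 2) (Fin 2) ℂ}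
  {L : ι → Matrix (Fin 2) (Fin 2) ℂ} {J : Matrix ι ι ℝ}

lemma trace_inv_mul_fisherTerm_le (hρ : ρ.PosSemidef) (hρ1 : ρ.trace = 1)
    (hL : ∀ i, (L i).IsHermitian) (hL1 : ∀ i, sldInner ρ (L i) 1 = 0)
    (hJL : ∀ i j, sldInner ρ (L i) (L j) = J i j) (hJ : IsUnit J.det)
    {E : Matrix (Fin 2) (Fin 2) ℂ} (hE : E.PosSemidef) :
    (J⁻¹ * fisherTerm ρ L E).trace ≤ E.trace.re - sldInner ρ 1 E := by
  have hQ := dotProduct_inv_mulVec_add_sq_le hρ hρ1 hL hL1 hJL hJ hE.1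
  have hEE := sldInner_self_le_mul_re_trace hρ.1 hρ1 hE
  have htr : (J⁻¹ * fisherTerm ρ L E).trace =
      (sldInner ρ 1 E)⁻¹ * (probGrad ρ L E ⬝ᵥ J⁻¹ *ᵥ probGrad ρ L E) := by
    rw [fisherTerm, mul_smul_comm, trace_smul, mul_vecMulVec, trace_vecMulVec, dotProduct_comm,
      smul_eq_mul]
  rw [htr]
  rcases (sldInner_one_nonneg hρ hE).eq_or_lt with hp | hp
  · rw [← hp, _root_.inv_zero, zero_mul, sub_zero]
    exact (Complex.nonneg_iff.mp hE.trace_nonneg).1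
  · rw [inv_mul_le_iff₀ hp]
    nlinarith

lemma trace_inv_mul_fisherInfo_le_one (hρ : ρ.PosSemidef) (hρ1 : ρ.trace = 1)
    (hL : ∀ i, (L i).IsHermitian) (hL1 : ∀ i, sldInner ρ (L i) 1 = 0)
    (hJL : ∀ i j, sldInner ρ (L i) (L j) = J i j) (hJ : IsUnit J.det)
    {κ : Type*} [Fintype κ] {M : κ → Matrix (Fin 2) (Fin 2) ℂ} (hM : IsPOVM M) :
    (J⁻¹ * fisherInfo ρ L M).trace ≤ 1 :=
  calc (J⁻¹ * fisherInfo ρ L M).trace = ∑ k, (J⁻¹ * fisherTerm ρ L (M k)).trace := by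
        rw [fisherInfo, Finset.mul_sum, trace_sum]
    _ ≤ ∑ k, ((M k).trace.re - sldInner ρ 1 (M k)) :=
        Finset.sum_le_sum fun k _ => trace_inv_mul_fisherTerm_le hρ hρ1 hL hL1 hJL hJ (hM.1 k)
    _ = 1 := by
        rw [Finset.sum_sub_distrib, ← Complex.re_sum, ← trace_sum, ← map_sum, hM.2,
          sldInner_one_one hρ1, trace_one]
        norm_num

lemma exists_isPOVM_fisherInfo_eq_vecMulVec (hρ : ρ.PosSemidef) (hρ1 : ρ.trace = 1)
    (hL : ∀ i, (L i).IsHermitian) (hL1 : ∀ i, sldInner ρ (L i) 1 = 0)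
    (hJL : ∀ i j, sldInner ρ (L i) (L j) = J i j) (hJ : IsUnit J.det) {u : ι → ℝ}
    (hu : u ⬝ᵥ J⁻¹ *ᵥ u = 1) :
    ∃ M : Bool → Matrix (Fin 2) (Fin 2) ℂ, IsPOVM M ∧ fisherInfo ρ L M = vecMulVec u u := by
  set X := ∑ i, (J⁻¹ *ᵥ u) i • L i
  have hX : X.IsHermitian := isHermitian_sum_smul hL _
  have hXL : probGrad ρ L X = u := by
    rw [probGrad_sum_smul hJL, mulVec_mulVec, mul_nonsing_inv J hJ, one_mulVec]
  have hX1 : sldInner ρ X 1 = 0 := by simp [X, hL1]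
  have hXX : sldInner ρ X X = 1 := by
    rw [sldInner_sum_smul_left, hXL, dotProduct_comm, hu]
  obtain ⟨t, a, ha0, ha1, hta, hP⟩ := exists_isIdempotentElem_smul_add_smul_one
    (mul_self_eq_re_trace_smul_add_one hρ.1 hρ1 hX hX1 hXX)
  have hPh : (t • X + a • 1).IsHermitian :=
    (hX.smul (IsSelfAdjoint.all t)).add (isHermitian_one.smul (IsSelfAdjoint.all a))
  have hQ : 1 - (t • X + a • 1) = (-t) • X + (1 - a) • 1 := by module
  refine ⟨fun b => bif b then t • X + a • 1 else 1 - (t • X + a • 1), ⟨?_, ?_⟩, ?_⟩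
  · rintro (_ | _)
    · exact (isHermitian_one.sub hPh).posSemidef_of_isIdempotentElem hP.one_sub
    · exact hPh.posSemidef_of_isIdempotentElem hP
  · simp
  · have hX1' : sldInner ρ 1 X = 0 := sldInner_comm.trans hX1
    have ha1' : 1 - a ≠ 0 := by linarith
    have hweights : t ^ 2 / a + (-t) ^ 2 / (1 - a) = 1 := by
      field_simp
      linear_combination hta
    rw [fisherInfo, Fintype.sum_bool]
    simp only [cond_true, cond_false]
    rw [hQ, fisherTerm_smul_add_smul_one hρ1 hL1 hX1', fisherTerm_smul_add_smul_one hρ1 hL1 hX1',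
      hXL, ← add_smul, hweights, one_smul]

lemma exists_isPOVM_smul_fisherInfo_eq_vecMulVec (hρ : ρ.PosSemidef) (hρ1 : ρ.trace = 1)
    (hL : ∀ i, (L i).IsHermitian) (hL1 : ∀ i, sldInner ρ (L i) 1 = 0)
    (hJL : ∀ i j, sldInner ρ (L i) (L j) = J i j) (hJ : J.PosDef) (u : ι → ℝ) :
    ∃ M : Bool → Matrix (Fin 2) (Fin 2) ℂ,
      IsPOVM M ∧ (u ⬝ᵥ J⁻¹ *ᵥ u) • fisherInfo ρ L M = vecMulVec u u := by
  rcases eq_or_ne u 0 with rfl | hu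
  · refine ⟨fun b => bif b then 1 else 0, ⟨?_, by simp⟩, by simp⟩
    rintro (_ | _)
    · exact PosSemidef.zero
    · exact PosSemidef.one
  · set q := u ⬝ᵥ J⁻¹ *ᵥ u
    have hq : 0 < q := by simpa [star_trivial] using hJ.inv.dotProduct_mulVec_pos hu
    have hs : (√q)⁻¹ * (√q)⁻¹ = q⁻¹ := by rw [← mul_inv, Real.mul_self_sqrt hq.le]
    obtain ⟨M, hM, hMu⟩ := exists_isPOVM_fisherInfo_eq_vecMulVec hρ hρ1 hL hL1 hJL
      (isUnit_iff_ne_zero.mpr hJ.det_pos.ne') (u := (√q)⁻¹ • u)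
      (by rw [mulVec_smul, smul_dotProduct, dotProduct_smul, smul_eq_mul, smul_eq_mul,
        ← mul_assoc, hs, inv_mul_cancel₀ hq.ne'])
    refine ⟨M, hM, ?_⟩
    rw [hMu, smul_vecMulVec, vecMulVec_smul, smul_smul, smul_smul, mul_assoc, hs,
      mul_inv_cancel₀ hq.ne', one_smul]

lemma exists_isPOVM_fisherInfo_eq_iff (hρ : ρ.PosSemidef) (hρ1 : ρ.trace = 1)
    (hL : ∀ i, (L i).IsHermitian) (hL1 : ∀ i, sldInner ρ (L i) 1 = 0)
    (hJL : ∀ i j, sldInner ρ (L i) (L j) = J i j) (hJ : J.PosDef) (A : Matrix ι ι ℝ) :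
    (∃ (s : ℕ) (M : Fin s → Matrix (Fin 2) (Fin 2) ℂ), IsPOVM M ∧ fisherInfo ρ L M = A) ↔
      A.PosSemidef ∧ (J⁻¹ * A).trace ≤ 1 := by
  have hJu : IsUnit J.det := isUnit_iff_ne_zero.mpr hJ.det_pos.ne'
  constructor
  · rintro ⟨s, M, hM, rfl⟩
    exact ⟨fisherInfo_posSemidef hρ hM.1,
      trace_inv_mul_fisherInfo_le_one hρ hρ1 hL hL1 hJL hJu hM⟩
  · rintro ⟨hA, htr⟩
    obtain ⟨m, a, rfl⟩ := posSemidef_iff_eq_sum_vecMulVec.mp hA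
    simp only [star_trivial] at htr ⊢
    choose M hM hMa using fun k =>
      exists_isPOVM_smul_fisherInfo_eq_vecMulVec hρ hρ1 hL hL1 hJL hJ (a k)
    set q := fun k => a k ⬝ᵥ J⁻¹ *ᵥ a k
    have hq : ∀ k, 0 ≤ q k := fun k => by
      simpa [star_trivial] using hJ.inv.posSemidef.dotProduct_mulVec_nonneg (a k)
    have hq1 : ∑ k, q k ≤ 1 := by
      convert htr using 1
      simp only [q, Finset.mul_sum, trace_sum, mul_vecMulVec, trace_vecMulVec, dotProduct_comm]
    let e := Fintype.equivFin (Option (Fin m × Bool))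
    refine ⟨_, mixture q M ∘ e.symm, (isPOVM_mixture hq hq1 hM).comp_equiv e.symm, ?_⟩
    rw [fisherInfo_comp_equiv, fisherInfo_mixture hL1]
    exact Finset.sum_congr rfl fun k _ => hMa k

end QubitFisher

section SquareRoot

variable {ι : Type*} [Fintype ι] [DecidableEq ι]

lemma exists_posSemidef_trace_le_eq_mul_mul_iff {S A : Matrix ι ι ℝ} (hS : S.IsHermitian)
    (hSu : IsUnit S.det) :
    (∃ G : Matrix ι ι ℝ, G.PosSemidef ∧ G.trace ≤ 1 ∧ A = S * G * S) ↔
      A.PosSemidef ∧ ((S * S)⁻¹ * A).trace ≤ 1 := by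
  have htrace : ∀ G, ((S * S)⁻¹ * (S * G * S)).trace = G.trace := fun G => by
    simp only [Matrix.mul_inv_rev, Matrix.mul_assoc, nonsing_inv_mul_cancel_left S _ hSu]
    rw [trace_mul_comm, Matrix.mul_assoc, mul_nonsing_inv S hSu, Matrix.mul_one]
  constructor
  · rintro ⟨G, hG, hGtr, rfl⟩
    refine ⟨?_, (htrace G).trans_le hGtr⟩
    simpa only [hS.eq] using hG.conjTranspose_mul_mul_same S
  · rintro ⟨hA, htr⟩
    have hSi : (S⁻¹)ᴴ = S⁻¹ := by rw [conjTranspose_nonsing_inv, hS.eq]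
    have hA' : A = S * (S⁻¹ * A * S⁻¹) * S := by
      simp only [Matrix.mul_assoc, nonsing_inv_mul S hSu, Matrix.mul_one,
        ← Matrix.mul_assoc S, mul_nonsing_inv S hSu, Matrix.one_mul]
    refine ⟨S⁻¹ * A * S⁻¹, ?_, ?_, hA'⟩
    · simpa only [hSi] using hA.conjTranspose_mul_mul_same S⁻¹
    · rwa [← htrace, ← hA']

end SquareRoot

section Msqrt

variable {d : ℕ} {A : Matrix (Fin d) (Fin d) ℝ}

lemma msqrt_eq_cfc (hA : A.PosSemidef) : msqrt A = cfc Real.sqrt A := by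
  rw [msqrt, dif_pos hA, hA.1.cfc_eq]
  rfl

lemma isHermitian_msqrt (hA : A.PosSemidef) : (msqrt A).IsHermitian := by
  rw [msqrt_eq_cfc hA]
  exact cfc_predicate _ _

lemma msqrt_mul_self (hA : A.PosSemidef) : msqrt A * msqrt A = A := by
  rw [msqrt_eq_cfc hA, ← cfc_mul Real.sqrt Real.sqrt A Real.continuous_sqrt.continuousOn
    Real.continuous_sqrt.continuousOn]
  conv_rhs => rw [← cfc_id' ℝ A hA.1]
  refine cfc_congr fun x hx => Real.mul_self_sqrt ?_
  obtain ⟨i, rfl⟩ := hA.1.spectrum_real_eq_range_eigenvalues ▸ hx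
  exact hA.eigenvalues_nonneg i

lemma isUnit_det_msqrt (hA : A.PosDef) : IsUnit (msqrt A).det := by
  refine isUnit_of_mul_isUnit_left (y := (msqrt A).det) ?_
  rw [← det_mul, msqrt_mul_self hA.posSemidef]
  exact isUnit_iff_ne_zero.mpr hA.det_pos.ne'

end Msqrt

theorem stmt13_general {d : ℕ}
    (ρ : Matrix (Fin 2) (Fin 2) ℂ) (hρ : ρ.PosDef) (hρ1 : ρ.trace = 1)
    (inn : Matrix (Fin 2) (Fin 2) ℂ → Matrix (Fin 2) (Fin 2) ℂ → ℂ)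
    (hinn : ∀ A B, inn A B = (1 / 2 : ℂ) * (ρ * (Aᴴ * B + B * Aᴴ)).trace)
    (L : Fin d → Matrix (Fin 2) (Fin 2) ℂ) (hLh : ∀ i, (L i).IsHermitian)
    (horthI : ∀ i, inn (L i) 1 = 0)
    (J : Matrix (Fin d) (Fin d) ℝ)
    (hJdef : ∀ i j, (J i j : ℂ) = inn (L i) (L j)) (hJ : J.PosDef) :
    {A : Matrix (Fin d) (Fin d) ℝ | ∃ (s : ℕ) (M : Fin s → Matrix (Fin 2) (Fin 2) ℂ),
        (∀ n, (M n).PosSemidef) ∧ (∑ n, M n = 1) ∧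
        ∀ i j, (A i j : ℂ) = ∑ n, inn (L i) (M n) * inn (L j) (M n) / inn 1 (M n)} =
      {B : Matrix (Fin d) (Fin d) ℝ | ∃ G : Matrix (Fin d) (Fin d) ℝ,
        G.PosSemidef ∧ G.trace ≤ 1 ∧ B = msqrt J * G * msqrt J} := by
  have hinn' : ∀ A B, A.IsHermitian → B.IsHermitian → inn A B = sldInner ρ A B :=
    fun A B hA hB => by rw [hinn, hA.eq, ofReal_sldInner hρ.1 hA hB]
  have hL1 (i) : sldInner ρ (L i) 1 = 0 := by
    exact_mod_cast (hinn' _ _ (hLh i) isHermitian_one).symm.trans (horthI i)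
  have hJL (i j) : sldInner ρ (L i) (L j) = J i j := by
    exact_mod_cast (hinn' _ _ (hLh i) (hLh j)).symm.trans (hJdef i j).symm
  ext A
  rw [Set.mem_ofPred_eq, Set.mem_ofPred_eq, exists_posSemidef_trace_le_eq_mul_mul_iff
    (isHermitian_msqrt hJ.posSemidef) (isUnit_det_msqrt hJ), msqrt_mul_self hJ.posSemidef,
    ← exists_isPOVM_fisherInfo_eq_iff hρ.posSemidef hρ1 hLh hL1 hJL hJ]
  refine exists_congr fun s => exists_congr fun M => ?_
  rw [IsPOVM, and_assoc]
  refine and_congr_right fun hM => and_congr_right fun _ => ?_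
  have hentry (i j) : ∑ n, inn (L i) (M n) * inn (L j) (M n) / inn 1 (M n) =
      (fisherInfo ρ L M i j : ℂ) := by
    simp [fisherInfo_apply, hinn' _ _ (hLh _) (hM _).1, hinn' _ _ isHermitian_one (hM _).1]
  simp only [hentry, Complex.ofReal_inj, eq_comm (a := A _ _)]
  exact Matrix.ext_iff

/-- For a qubit (`dim H = 2`) quantum statistical model with `d`-dimensional parameter
(`1 ≤ d ≤ 3`), SLDs `L_i` (selfadjoint, with `⟨L_i, I⟩_θ = 0`) and positive definite SLD
Fisher information matrix `J = [⟨L_i,L_j⟩_θ]`, the set of attainable classical Fisher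
information matrices `g(M)_{ij} = Σ_n ⟨L_i,M_n⟩⟨L_j,M_n⟩/⟨I,M_n⟩` over all POVMs `M` equals
`{√J G √J : G real positive semidefinite, Tr G ≤ 1}`. -/
theorem stmt13 {d : ℕ} (hd1 : 1 ≤ d) (hd3 : d ≤ 3)
    (ρ : Matrix (Fin 2) (Fin 2) ℂ) (hρ : ρ.PosDef) (hρ1 : ρ.trace = 1)
    (inn : Matrix (Fin 2) (Fin 2) ℂ → Matrix (Fin 2) (Fin 2) ℂ → ℂ)
    (hinn : ∀ A B, inn A B = (1 / 2 : ℂ) * (ρ * (Aᴴ * B + B * Aᴴ)).trace)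
    (L : Fin d → Matrix (Fin 2) (Fin 2) ℂ) (hLh : ∀ i, (L i).IsHermitian)
    (horthI : ∀ i, inn (L i) 1 = 0)
    (J : Matrix (Fin d) (Fin d) ℝ)
    (hJdef : ∀ i j, (J i j : ℂ) = inn (L i) (L j)) (hJ : J.PosDef) :
    {A : Matrix (Fin d) (Fin d) ℝ | ∃ (s : ℕ) (M : Fin s → Matrix (Fin 2) (Fin 2) ℂ),
        (∀ n, (M n).PosSemidef) ∧ (∑ n, M n = 1) ∧
        ∀ i j, (A i j : ℂ) = ∑ n, inn (L i) (M n) * inn (L j) (M n) / inn 1 (M n)} =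
      {B : Matrix (Fin d) (Fin d) ℝ | ∃ G : Matrix (Fin d) (Fin d) ℝ,
        G.PosSemidef ∧ G.trace ≤ 1 ∧ B = msqrt J * G * msqrt J} :=
  stmt13_general ρ hρ hρ1 inn hinn L hLh horthI J hJdef hJ
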